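/- Let $0 < 2H < 1$ and $\lambda > 0$. For $0 \le s \le t$, $\left| \int_s^t \int_s^r \cos(\lambda(r - r_1)) (r - r_1)^{2H}\, dr_1\, dr \right| \le C \lambda^{-2H-1} (t - s)$ for a constant $C$ depending only on $H$. -/

import Mathlib

/-! With `a = 2H`, the substitutions `u = r - r₁` and `x = λu` turn the double integral into
`λ^(-a-2) ∫₀^Y ∫₀^y cos x · x^a dx dy` with `Y = λ(t - s)`. Integrating by parts twice, this equals
`Y S(Y) - (1 + a) ∫₀^Y S`, where `S(y) = ∫₀^y sin v · v^(a-1) dv`. The function `S` is bounded on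
`[0, ∞)` (it converges to `Γ(a) sin(πa/2)`), so the double integral is `O(Y)`. -/

open Real Set intervalIntegral MeasureTheory

noncomputable def sinMulRpowIntegral (a x : ℝ) : ℝ :=
  ∫ v in (0:ℝ)..x, sin v * v ^ (a - 1)

section SinMulRpow

variable {a : ℝ}

lemma intervalIntegrable_sin_mul_rpow_sub_one (ha : 0 < a) (b c : ℝ) :
    IntervalIntegrable (fun v => sin v * v ^ (a - 1)) volume b c :=
  (intervalIntegrable_rpow' (by linarith)).continuousOn_mul continuous_sin.continuousOn

lemma continuous_sinMulRpowIntegral (ha : 0 < a) : Continuous (sinMulRpowIntegral a) :=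
  continuous_primitive (intervalIntegrable_sin_mul_rpow_sub_one ha) 0

lemma hasDerivAt_sinMulRpowIntegral (ha : 0 < a) {x : ℝ} (hx : x ≠ 0) :
    HasDerivAt (sinMulRpowIntegral a) (sin x * x ^ (a - 1)) x := by
  have hcont : ∀ y ∈ ({0}ᶜ : Set ℝ), ContinuousAt (fun v => sin v * v ^ (a - 1)) y :=
    fun y hy => continuous_sin.continuousAt.mul (continuousAt_rpow_const y _ (Or.inl hy))
  exact integral_hasDerivAt_right (intervalIntegrable_sin_mul_rpow_sub_one ha 0 x)
    (ContinuousAt.stronglyMeasurableAtFilter isOpen_compl_singleton hcont x hx) (hcont x hx)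

lemma abs_sinMulRpowIntegral_le_rpow_div (ha : 0 < a) {x : ℝ} (hx : 0 ≤ x) :
    |sinMulRpowIntegral a x| ≤ x ^ a / a := by
  have hint : ∫ v in (0:ℝ)..x, v ^ (a - 1) = x ^ a / a := by
    rw [integral_rpow (Or.inl (by linarith)), sub_add_cancel, zero_rpow ha.ne', sub_zero]
  calc |sinMulRpowIntegral a x| ≤ ∫ v in (0:ℝ)..x, |sin v * v ^ (a - 1)| :=
        abs_integral_le_integral_abs hx
    _ ≤ ∫ v in (0:ℝ)..x, v ^ (a - 1) := by
        refine integral_mono_on hx (intervalIntegrable_sin_mul_rpow_sub_one ha 0 x).abs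
          (intervalIntegrable_rpow' (by linarith)) fun v hv => ?_
        rw [abs_mul, abs_of_nonneg (rpow_nonneg hv.1 _)]
        exact mul_le_of_le_one_left (rpow_nonneg hv.1 _) (abs_sin_le_one v)
    _ = x ^ a / a := hint

-- Integrate by parts against `-cos`: the boundary terms are at most `1`, and the remaining
-- integral is at most the total variation `1 - x ^ (a - 1)` of `v ^ (a - 1)` on `[1, x]`.
lemma abs_integral_one_sin_mul_rpow_sub_one_le (ha : a < 1) {x : ℝ} (hx : 1 ≤ x) :
    |∫ v in (1:ℝ)..x, sin v * v ^ (a - 1)| ≤ 3 := by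
  have hpos : ∀ v ∈ uIcc 1 x, 0 < v := fun v hv => by
    rw [uIcc_of_le hx] at hv; linarith [hv.1]
  have hu : ∀ v ∈ uIcc 1 x,
      HasDerivAt (fun v => v ^ (a - 1)) ((a - 1) * v ^ (a - 1 - 1)) v :=
    fun v hv => hasDerivAt_rpow_const (Or.inl (hpos v hv).ne')
  have hu' : IntervalIntegrable (fun v => (a - 1) * v ^ (a - 1 - 1)) volume 1 x :=
    (continuousOn_const.mul (continuousOn_id.rpow_const fun v hv =>
      Or.inl (hpos v hv).ne')).intervalIntegrable
  have hcos : ∀ v, HasDerivAt (fun v => -cos v) (sin v) v := fun v =>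
    (hasDerivAt_cos v).neg.congr_deriv (neg_neg _)
  have hparts := integral_mul_deriv_eq_deriv_mul hu (fun v _ => hcos v) hu'
    (continuous_sin.intervalIntegrable 1 x)
  have hvar : ∫ v in (1:ℝ)..x, (a - 1) * v ^ (a - 1 - 1) = x ^ (a - 1) - 1 := by
    rw [integral_eq_sub_of_hasDerivAt hu hu', one_rpow]
  have hrest : |∫ v in (1:ℝ)..x, (a - 1) * v ^ (a - 1 - 1) * -cos v| ≤ 1 - x ^ (a - 1) :=
    calc _ ≤ ∫ v in (1:ℝ)..x, |(a - 1) * v ^ (a - 1 - 1) * -cos v| :=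
          abs_integral_le_integral_abs hx
      _ ≤ ∫ v in (1:ℝ)..x, -((a - 1) * v ^ (a - 1 - 1)) := by
          refine integral_mono_on hx (hu'.mul_continuousOn continuous_cos.neg.continuousOn).abs
            hu'.neg fun v hv => ?_
          have hv0 : 0 ≤ v ^ (a - 1 - 1) := rpow_nonneg (by linarith [hv.1]) _
          rw [abs_mul, abs_neg, abs_of_nonpos (mul_nonpos_of_nonpos_of_nonneg (by linarith) hv0)]
          exact mul_le_of_le_one_right (by nlinarith) (abs_cos_le_one v)
      _ = 1 - x ^ (a - 1) := by rw [intervalIntegral.integral_neg, hvar]; ring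
  have hxa : x ^ (a - 1) ≤ 1 := rpow_le_one_of_one_le_of_nonpos hx (by linarith)
  have hxa0 : 0 ≤ x ^ (a - 1) := rpow_nonneg (by linarith) _
  have hcosx := abs_le.1 (abs_cos_le_one x)
  have hcos1 := abs_le.1 (abs_cos_le_one 1)
  have hrest' := abs_le.1 hrest
  simp only [mul_comm (sin _)] at hparts ⊢
  rw [hparts, one_rpow, abs_le]
  constructor <;> nlinarith

lemma abs_sinMulRpowIntegral_le (ha₀ : 0 < a) (ha₁ : a < 1) {x : ℝ} (hx : 0 ≤ x) :
    |sinMulRpowIntegral a x| ≤ 1 / a + 3 := by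
  rcases le_or_gt x 1 with hx1 | hx1
  · calc |sinMulRpowIntegral a x| ≤ x ^ a / a := abs_sinMulRpowIntegral_le_rpow_div ha₀ hx
      _ ≤ 1 / a := by gcongr; exact rpow_le_one hx hx1 ha₀.le
      _ ≤ 1 / a + 3 := by linarith
  · have hsplit := integral_add_adjacent_intervals
      (intervalIntegrable_sin_mul_rpow_sub_one ha₀ 0 1)
      (intervalIntegrable_sin_mul_rpow_sub_one ha₀ 1 x)
    have h₁ := abs_sinMulRpowIntegral_le_rpow_div ha₀ zero_le_one
    rw [one_rpow] at h₁
    calc |sinMulRpowIntegral a x|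
        ≤ |sinMulRpowIntegral a 1| + |∫ v in (1:ℝ)..x, sin v * v ^ (a - 1)| := by
          rw [sinMulRpowIntegral, ← hsplit]; exact abs_add_le _ _
      _ ≤ 1 / a + 3 := add_le_add h₁ (abs_integral_one_sin_mul_rpow_sub_one_le ha₁ hx1.le)

end SinMulRpow

section CosMulRpow

variable {a : ℝ}

lemma continuous_cos_mul_rpow (ha : 0 < a) : Continuous fun x => cos x * x ^ a :=
  continuous_cos.mul (continuous_rpow_const ha.le)

lemma integral_cos_mul_rpow (ha : 0 < a) {y : ℝ} (hy : 0 ≤ y) :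
    ∫ x in (0:ℝ)..y, cos x * x ^ a = sin y * y ^ a - a * sinMulRpowIntegral a y := by
  have hF : ContinuousOn (fun x => sin x * x ^ a - a * sinMulRpowIntegral a x) (Icc 0 y) :=
    ((continuous_sin.mul (continuous_rpow_const ha.le)).sub
      (continuous_const.mul (continuous_sinMulRpowIntegral ha))).continuousOn
  have hF' : ∀ x ∈ Ioo 0 y, HasDerivWithinAt (fun x => sin x * x ^ a - a * sinMulRpowIntegral a x)
      (cos x * x ^ a) (Ioi x) x := fun x hx => by
    have hd := ((hasDerivAt_sin x).mul (hasDerivAt_rpow_const (p := a) (Or.inl hx.1.ne'))).sub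
      ((hasDerivAt_sinMulRpowIntegral ha hx.1.ne').const_mul a)
    exact (hd.congr_deriv (by ring)).hasDerivWithinAt
  rw [integral_eq_sub_of_hasDeriv_right_of_le hy hF hF'
    ((continuous_cos_mul_rpow ha).intervalIntegrable 0 y)]
  simp [sinMulRpowIntegral, zero_rpow ha.ne']

lemma integral_integral_cos_mul_rpow (ha : 0 < a) {Y : ℝ} (hY : 0 ≤ Y) :
    ∫ y in (0:ℝ)..Y, ∫ x in (0:ℝ)..y, cos x * x ^ a
      = Y * sinMulRpowIntegral a Y - (1 + a) * ∫ y in (0:ℝ)..Y, sinMulRpowIntegral a y := by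
  have hS := continuous_sinMulRpowIntegral ha
  have hΦ : ContinuousOn (fun y => y * sinMulRpowIntegral a y
      - (1 + a) * ∫ z in (0:ℝ)..y, sinMulRpowIntegral a z) (Icc 0 Y) :=
    ((continuous_id.mul hS).sub
      (continuous_const.mul (continuous_primitive (hS.intervalIntegrable) 0))).continuousOn
  have hΦ' : ∀ y ∈ Ioo 0 Y, HasDerivWithinAt (fun y => y * sinMulRpowIntegral a y
      - (1 + a) * ∫ z in (0:ℝ)..y, sinMulRpowIntegral a z)
      (∫ x in (0:ℝ)..y, cos x * x ^ a) (Ioi y) y := fun y hy => by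
    have hd := ((hasDerivAt_id' y).mul (hasDerivAt_sinMulRpowIntegral ha hy.1.ne')).sub
      ((hS.integral_hasStrictDerivAt 0 y).hasDerivAt.const_mul (1 + a))
    refine (hd.congr_deriv ?_).hasDerivWithinAt
    have hy₀ : y ≠ 0 := hy.1.ne'
    rw [integral_cos_mul_rpow ha hy.1.le, rpow_sub_one hy₀]
    field_simp
    ring
  rw [integral_eq_sub_of_hasDeriv_right_of_le hY hΦ hΦ'
    ((continuous_primitive (fun b c => (continuous_cos_mul_rpow ha).intervalIntegrable b c)
      0).intervalIntegrable 0 Y)]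
  simp

lemma abs_integral_integral_cos_mul_rpow_le (ha₀ : 0 < a) (ha₁ : a < 1) {Y : ℝ} (hY : 0 ≤ Y) :
    |∫ y in (0:ℝ)..Y, ∫ x in (0:ℝ)..y, cos x * x ^ a| ≤ (2 + a) * (1 / a + 3) * Y := by
  have hSY := abs_sinMulRpowIntegral_le ha₀ ha₁ hY
  have hint : |∫ y in (0:ℝ)..Y, sinMulRpowIntegral a y| ≤ (1 / a + 3) * Y := by
    have h := norm_integral_le_of_norm_le_const (a := 0) (b := Y)
      (f := sinMulRpowIntegral a) fun y hy => by
        rw [uIoc_of_le hY] at hy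
        exact abs_sinMulRpowIntegral_le ha₀ ha₁ hy.1.le
    rwa [sub_zero, abs_of_nonneg hY] at h
  rw [integral_integral_cos_mul_rpow ha₀ hY]
  calc _ ≤ |Y * sinMulRpowIntegral a Y| + |(1 + a) * ∫ y in (0:ℝ)..Y, sinMulRpowIntegral a y| :=
        abs_sub _ _
    _ ≤ Y * (1 / a + 3) + (1 + a) * ((1 / a + 3) * Y) := by
        rw [abs_mul, abs_mul, abs_of_nonneg hY, abs_of_pos (show (0:ℝ) < 1 + a by linarith)]
        gcongr
    _ = (2 + a) * (1 / a + 3) * Y := by ring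

end CosMulRpow

lemma integral_integral_comp_sub (f : ℝ → ℝ) (s t : ℝ) :
    ∫ r in s..t, ∫ r₁ in s..r, f (r - r₁) = ∫ w in (0:ℝ)..t - s, ∫ u in (0:ℝ)..w, f u := by
  simp only [integral_comp_sub_left, sub_self]
  simpa using integral_comp_sub_right (a := s) (b := t) (fun w => ∫ u in (0:ℝ)..w, f u) s

section Scaling

variable {a l : ℝ}

lemma integral_comp_mul_mul_rpow (hl : 0 < l) (g : ℝ → ℝ) {w : ℝ} (hw : 0 ≤ w) :
    ∫ u in (0:ℝ)..w, g (l * u) * u ^ a = l ^ (-a - 1) * ∫ x in (0:ℝ)..l * w, g x * x ^ a := by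
  have hscale : EqOn (fun u => g (l * u) * u ^ a)
      (fun u => l ^ (-a) * (g (l * u) * (l * u) ^ a)) (uIcc 0 w) := fun u hu => by
    rw [uIcc_of_le hw] at hu
    dsimp only
    rw [mul_rpow hl.le hu.1, rpow_neg hl.le]
    field_simp [(rpow_pos_of_pos hl a).ne']
  rw [integral_congr hscale, intervalIntegral.integral_const_mul,
    integral_comp_mul_left (fun x => g x * x ^ a) hl.ne', mul_zero, smul_eq_mul,
    ← mul_assoc, ← rpow_neg_one, ← rpow_add hl]
  ring_nf

lemma integral_integral_comp_mul_mul_rpow (hl : 0 < l) (g : ℝ → ℝ) {T : ℝ} (hT : 0 ≤ T) :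
    ∫ w in (0:ℝ)..T, ∫ u in (0:ℝ)..w, g (l * u) * u ^ a
      = l ^ (-a - 2) * ∫ y in (0:ℝ)..l * T, ∫ x in (0:ℝ)..y, g x * x ^ a := by
  have hinner : EqOn (fun w => ∫ u in (0:ℝ)..w, g (l * u) * u ^ a)
      (fun w => l ^ (-a - 1) * ∫ x in (0:ℝ)..l * w, g x * x ^ a) (uIcc 0 T) := fun w hw => by
    rw [uIcc_of_le hT] at hw
    exact integral_comp_mul_mul_rpow hl g hw.1
  rw [integral_congr hinner, intervalIntegral.integral_const_mul,
    integral_comp_mul_left (fun y => ∫ x in (0:ℝ)..y, g x * x ^ a) hl.ne', mul_zero, smul_eq_mul,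
    ← mul_assoc, ← rpow_neg_one, ← rpow_add hl]
  ring_nf

end Scaling

/-- Double-integral estimate: for `0 < 2H < 1` there is a constant `C = C(H)` with
`|∫ s..t ∫ s..r cos(λ(r-r₁))(r-r₁)^{2H} dr₁ dr| ≤ C λ^{-2H-1}(t-s)`. -/
theorem stmt_11 (H : ℝ) (hH : H ∈ Set.Ioo (0:ℝ) (1/2)) :
    ∃ C : ℝ, 0 < C ∧ ∀ lam s t : ℝ, 0 < lam → 0 ≤ s → s ≤ t →
      |∫ r in s..t, ∫ r1 in s..r, Real.cos (lam * (r - r1)) * (r - r1) ^ (2*H)|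
        ≤ C * lam ^ (-2*H - 1) * (t - s) := by
  obtain ⟨hH₀, hH₁⟩ := hH
  refine ⟨(2 + 2 * H) * (1 / (2 * H) + 3), by positivity, fun lam s t hlam _ hst => ?_⟩
  have hT : 0 ≤ t - s := sub_nonneg.2 hst
  rw [integral_integral_comp_sub (fun u => cos (lam * u) * u ^ (2 * H)),
    integral_integral_comp_mul_mul_rpow hlam cos hT, abs_mul,
    abs_of_pos (rpow_pos_of_pos hlam _)]
  calc lam ^ (-(2 * H) - 2) * |∫ y in (0:ℝ)..lam * (t - s), ∫ x in (0:ℝ)..y, cos x * x ^ (2 * H)|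
      ≤ lam ^ (-(2 * H) - 2) * ((2 + 2 * H) * (1 / (2 * H) + 3) * (lam * (t - s))) := by
        gcongr
        exact abs_integral_integral_cos_mul_rpow_le (by linarith) (by linarith) (by positivity)
    _ = (2 + 2 * H) * (1 / (2 * H) + 3) * lam ^ (-2 * H - 1) * (t - s) := by
        rw [show -2 * H - 1 = -(2 * H) - 2 + 1 by ring, rpow_add_one hlam.ne']
        ring
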